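/- For the Rademacher polynomial sketch φₙ(x) = (W₁x ⊙ ⋯ ⊙ Wₙx)/√D with independent Wᵢ having i.i.d. Unif({−1,+1}) entries, the variance of the kernel estimate is Var[φₙ(x)ᵀφₙ(y)] = D^{-1}[(‖x‖²‖y‖² + 2((⟨x,y⟩)² − Σ_{k=1}^d x_k² y_k²))ⁿ − (⟨x,y⟩)^{2ن}]. -/

import Mathlib

/-! The entries of the `Wᵢ` form a Rademacher family. Feature `j` contributes
`Sⱼ = ∏ᵢ ⟨wᵢⱼ, x⟩⟨wᵢⱼ, y⟩`, where `wᵢⱼ` is row `j` of `Wᵢ`; the factors are independent, and so are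
the `Sⱼ`. Hence `Var[φₙ(x)ᵀφₙ(y)] = D⁻¹ Var[S₁]` and `Var[S₁] = E[U²]ⁿ - E[U]²ⁿ` for a single
factor `U = ⟨w, x⟩⟨w, y⟩`. Expanding `U`, `E[U] = ⟨x, y⟩` follows from `E[ε_a ε_b] = δ_ab`, and
`E[U²]` from the fourth moments `E[ε_a ε_b ε_c ε_e]`. -/

open MeasureTheory ProbabilityTheory Finset

namespace ProbabilityTheory

variable {Ω : Type*} [MeasurableSpace Ω] {μ : Measure Ω}

lemma iIndepFun.curry {ι κ 𝓧 : Type*} [MeasurableSpace 𝓧] {X : ι → κ → Ω → 𝓧}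
    (mX : ∀ i j, Measurable (X i j))
    (h : iIndepFun (fun p : ι × κ ↦ X p.1 p.2) μ) :
    iIndepFun (fun i ω j ↦ X i j ω) μ := by
  have := h.isProbabilityMeasure
  have : ∀ i j, IsProbabilityMeasure (μ.map (X i j)) :=
    fun i j ↦ Measure.isProbabilityMeasure_map (mX i j).aemeasurable
  have hrow : ∀ i, iIndepFun (X i) μ := fun i ↦
    h.precomp (g := Prod.mk i) (Prod.mk_right_injective i)
  have hcurry : (fun ω i j ↦ X i j ω) = MeasurableEquiv.curry ι κ 𝓧 ∘ fun ω p ↦ X p.1 p.2 ω := rfl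
  rw [iIndepFun_iff_map_fun_eq_infinitePi_map (by fun_prop), hcurry, ← Measure.map_map (by fun_prop) (by fun_prop),
    (iIndepFun_iff_map_fun_eq_infinitePi_map (by fun_prop)).1 h,
    Measure.infinitePi_map_curry (fun i j ↦ μ.map (X i j))]
  congr with i : 1
  exact ((iIndepFun_iff_map_fun_eq_infinitePi_map (by fun_prop)).1 (hrow i)).symm

lemma iIndepFun.variance_fun_prod {ι : Type*} [Fintype ι] {X : ι → Ω → ℝ} (h : iIndepFun X μ)
    (hX : ∀ i, MemLp (X i) ⊤ μ) :
    Var[fun ω ↦ ∏ i, X i ω; μ] = ∏ i, ∫ ω, X i ω ^ 2 ∂μ - ∏ i, (∫ ω, X i ω ∂μ) ^ 2 := by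
  have := h.isProbabilityMeasure
  have hprod : MemLp (fun ω ↦ ∏ i, X i ω) ⊤ μ := by simpa using MemLp.prod' fun i _ ↦ hX i
  have hmeas : ∀ i, AEMeasurable (X i) μ := fun i ↦ (hX i).aestronglyMeasurable.aemeasurable
  rw [variance_eq_sub (hprod.mono_exponent le_top)]
  simp only [Pi.pow_apply, ← prod_pow]
  rw [h.integral_fun_prod_comp (f := fun _ t ↦ t ^ 2) hmeas fun i ↦ by fun_prop,
    h.integral_fun_prod_comp (f := fun _ t ↦ t) hmeas fun i ↦ by fun_prop, prod_pow]

lemma variance_fun_sum_div_card_of_pairwise_indepFun {ι : Type*} [Fintype ι] {X : ι → Ω → ℝ}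
    (h : Pairwise fun i j ↦ IndepFun (X i) (X j) μ)
    (hX : ∀ i, MemLp (X i) 2 μ) {v : ℝ} (hv : ∀ i, Var[X i; μ] = v) :
    Var[fun ω ↦ (∑ i, X i ω) / Fintype.card ι; μ] = (Fintype.card ι : ℝ)⁻¹ * v := by
  have hsum : Var[fun ω ↦ ∑ i, X i ω; μ] = Fintype.card ι * v := by
    rw [← sum_fn, IndepFun.variance_sum (fun i _ ↦ hX i) fun i _ j _ hij ↦ h hij]
    simp [hv]
  simp_rw [div_eq_inv_mul]
  rw [variance_const_mul, hsum]
  rcases eq_or_ne (Fintype.card ι : ℝ) 0 with h0 | h0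
  · simp [h0]
  · field_simp

end ProbabilityTheory

lemma sum_mul_mul_sum_mul {κ R : Type*} [Fintype κ] [CommSemiring R] (u x y : κ → R) :
    (∑ k, u k * x k) * (∑ k, u k * y k) = ∑ a, ∑ b, u a * u b * (x a * y b) := by
  simp only [sum_mul_sum]
  exact sum_congr rfl fun a _ ↦ sum_congr rfl fun b _ ↦ by ring

/-- `E[ε_a ε_b ε_c ε_e]` for a Rademacher family: `1` if the indices pair up, `0` otherwise. All
three pairings hold when `a = b = c = e`, whence the correction term. -/
def rademacherFourthMoment {κ : Type*} [DecidableEq κ] (a b c e : κ) : ℝ :=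
  (if a = b then 1 else 0) * (if c = e then 1 else 0) +
    (if a = c then 1 else 0) * (if b = e then 1 else 0) +
    (if a = e then 1 else 0) * (if b = c then 1 else 0) -
    2 * ((if a = b then 1 else 0) * (if b = c then 1 else 0) * (if c = e then 1 else 0))

lemma sum_rademacherFourthMoment_mul {κ : Type*} [Fintype κ] [DecidableEq κ] (x y : κ → ℝ) :
    ∑ a, ∑ b, ∑ c, ∑ e, rademacherFourthMoment a b c e * (x a * y b * x c * y e) =
      (∑ k, x k ^ 2) * (∑ k, y k ^ 2) + 2 * ((∑ k, x k * y k) ^ 2 - ∑ k, x k ^ 2 * y k ^ 2) := by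
  have h1 : ∑ a, ∑ b, ∑ c, ∑ e, (if a = b then (1 : ℝ) else 0) * (if c = e then 1 else 0) *
      (x a * y b * x c * y e) = (∑ k, x k * y k) ^ 2 := by
    simp [sq, sum_mul_sum, mul_assoc]
  have h2 : ∑ a, ∑ b, ∑ c, ∑ e, (if a = c then (1 : ℝ) else 0) * (if b = e then 1 else 0) *
      (x a * y b * x c * y e) = (∑ k, x k ^ 2) * (∑ k, y k ^ 2) := by
    simp [sq, sum_mul_sum, mul_comm, mul_left_comm]
  have h3 : ∑ a, ∑ b, ∑ c, ∑ e, (if a = e then (1 : ℝ) else 0) * (if b = c then 1 else 0) *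
      (x a * y b * x c * y e) = (∑ k, x k * y k) ^ 2 := by
    simp [sq, sum_mul_sum, mul_comm, mul_left_comm]
  have h4 : ∑ a, ∑ b, ∑ c, ∑ e, (if a = b then (1 : ℝ) else 0) * (if b = c then 1 else 0) *
      (if c = e then 1 else 0) * (x a * y b * x c * y e) = ∑ k, x k ^ 2 * y k ^ 2 := by
    simp [sq, mul_comm, mul_left_comm]
  simp only [rademacherFourthMoment, add_mul, sub_mul, sum_add_distrib, sum_sub_distrib, h1, h2,
    h3]
  simp only [mul_assoc (2 : ℝ), ← mul_sum, h4]
  ring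

/-- For `±1`-valued variables, mean zero means uniform on `{-1, 1}`. -/
structure IsRademacherFamily {Ω κ : Type*} [MeasurableSpace Ω] (ε : κ → Ω → ℝ)
    (μ : Measure Ω) : Prop where
  independent : iIndepFun ε μ
  measurable : ∀ k, Measurable (ε k)
  eq_one_or_eq_neg_one : ∀ k ω, ε k ω = 1 ∨ ε k ω = -1
  integral_eq_zero : ∀ k, ∫ ω, ε k ω ∂μ = 0

namespace IsRademacherFamily

section

variable {Ω κ : Type*} [MeasurableSpace Ω] {μ : Measure Ω} {ε : κ → Ω → ℝ}

lemma comp_injective {ι : Type*} {g : ι → κ} (h : IsRademacherFamily ε μ) (hg : g.Injective) :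
    IsRademacherFamily (fun i ↦ ε (g i)) μ :=
  ⟨h.independent.precomp hg, fun i ↦ h.measurable (g i), fun i ↦ h.eq_one_or_eq_neg_one (g i),
    fun i ↦ h.integral_eq_zero (g i)⟩

lemma mul_self_eq_one (h : IsRademacherFamily ε μ) (k : κ) (ω : Ω) : ε k ω * ε k ω = 1 := by
  rcases h.eq_one_or_eq_neg_one k ω with hk | hk <;> simp [hk]

lemma abs_eq_one (h : IsRademacherFamily ε μ) (k : κ) (ω : Ω) : |ε k ω| = 1 := by
  rcases h.eq_one_or_eq_neg_one k ω with hk | hk <;> simp [hk]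

lemma integral_prod_pow [Fintype κ] (h : IsRademacherFamily ε μ) (m : κ → ℕ) :
    ∫ ω, ∏ k, ε k ω ^ m k ∂μ = ∏ k, if Even (m k) then 1 else 0 := by
  have := h.independent.isProbabilityMeasure
  rw [h.independent.integral_fun_prod_comp (f := fun k t ↦ t ^ m k)
    (fun k ↦ (h.measurable k).aemeasurable) fun k ↦ by fun_prop]
  refine prod_congr rfl fun k _ ↦ ?_
  rcases Nat.even_or_odd' (m k) with ⟨r, hr | hr⟩
  · have : ∀ ω, ε k ω ^ m k = 1 := fun ω ↦ by rw [hr, pow_mul, sq, h.mul_self_eq_one, one_pow]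
    simp_rw [this]
    simp [hr]
  · have : ∀ ω, ε k ω ^ m k = ε k ω := fun ω ↦ by
      rw [hr, pow_succ, pow_mul, sq, h.mul_self_eq_one, one_pow, one_mul]
    simp_rw [this]
    simp [hr, h.integral_eq_zero]

lemma integral_mul [DecidableEq κ] (h : IsRademacherFamily ε μ) (a b : κ) :
    ∫ ω, ε a ω * ε b ω ∂μ = if a = b then 1 else 0 := by
  have := h.independent.isProbabilityMeasure
  split_ifs with hab
  · simp [hab, h.mul_self_eq_one]
  · rw [(h.independent.indepFun hab).integral_fun_mul_eq_mul_integral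
      (h.measurable a).aestronglyMeasurable (h.measurable b).aestronglyMeasurable,
      h.integral_eq_zero, zero_mul]

lemma integral_mul_mul_mul [Fintype κ] [DecidableEq κ] (h : IsRademacherFamily ε μ)
    (a b c e : κ) :
    ∫ ω, ε a ω * ε b ω * ε c ω * ε e ω ∂μ =
      rademacherFourthMoment a b c e := by
  unfold rademacherFourthMoment
  by_cases hab : a = b
  · subst hab
    simp_rw [h.mul_self_eq_one, one_mul, h.integral_mul]
    split_ifs <;> subst_vars <;> norm_num at *
  by_cases hac : a = c
  · subst hac
    have hpt : ∀ ω, ε a ω * ε b ω * ε a ω * ε e ω = ε b ω * ε e ω := fun ω ↦ by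
      linear_combination (ε b ω * ε e ω) * h.mul_self_eq_one a ω
    simp_rw [hpt, h.integral_mul]
    split_ifs <;> subst_vars <;> norm_num at *
  by_cases hae : a = e
  · subst hae
    have hpt : ∀ ω, ε a ω * ε b ω * ε c ω * ε a ω = ε b ω * ε c ω := fun ω ↦ by
      linear_combination (ε b ω * ε c ω) * h.mul_self_eq_one a ω
    simp_rw [hpt, h.integral_mul]
    split_ifs <;> subst_vars <;> norm_num at *
  -- `ε a` occurs exactly once in the monomial, so the monomial has mean zero.
  let m : κ → ℕ := fun k ↦ (if k = a then 1 else 0) + (if k = b then 1 else 0) +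
    (if k = c then 1 else 0) + (if k = e then 1 else 0)
  have hpt : ∀ ω, ε a ω * ε b ω * ε c ω * ε e ω = ∏ k, ε k ω ^ m k := fun ω ↦ by
    simp only [m, pow_add, prod_mul_distrib, pow_ite, pow_one, pow_zero, prod_ite_eq', mem_univ,
      if_true]
  simp_rw [hpt, h.integral_prod_pow]
  rw [prod_eq_zero (mem_univ a) (by simp [m, hab, hac, hae])]
  simp [hab, hac, hae]

lemma memLp_top (h : IsRademacherFamily ε μ) (k : κ) : MemLp (ε k) ⊤ μ :=
  memLp_top_of_bound (h.measurable k).aestronglyMeasurable 1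
    (ae_of_all _ fun ω ↦ (h.abs_eq_one k ω).le)

lemma memLp_top_dot_mul_dot [Fintype κ] (h : IsRademacherFamily ε μ) (x y : κ → ℝ) :
    MemLp (fun ω ↦ (∑ k, ε k ω * x k) * (∑ k, ε k ω * y k)) ⊤ μ :=
  (memLp_finsetSum _ fun k _ ↦ (h.memLp_top k).mul_const (y k)).mul'
    (memLp_finsetSum _ fun k _ ↦ (h.memLp_top k).mul_const (x k))

lemma integrable_mul (h : IsRademacherFamily ε μ) (a b : κ) :
    Integrable (fun ω ↦ ε a ω * ε b ω) μ := by
  have := h.independent.isProbabilityMeasure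
  have := h.measurable
  exact .of_bound (by fun_prop) 1 (ae_of_all _ fun ω ↦ by simp [h.abs_eq_one])

lemma integrable_mul_mul_mul (h : IsRademacherFamily ε μ) (a b c e : κ) :
    Integrable (fun ω ↦ ε a ω * ε b ω * ε c ω * ε e ω) μ := by
  have := h.independent.isProbabilityMeasure
  have := h.measurable
  exact .of_bound (by fun_prop) 1 (ae_of_all _ fun ω ↦ by simp [h.abs_eq_one])

lemma integral_dot_mul_dot [Fintype κ] [DecidableEq κ] (h : IsRademacherFamily ε μ)
    (x y : κ → ℝ) :
    ∫ ω, (∑ k, ε k ω * x k) * (∑ k, ε k ω * y k) ∂μ = ∑ k, x k * y k := by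
  simp_rw [sum_mul_mul_sum_mul]
  simp [integral_finsetSum, integrable_finsetSum, (h.integrable_mul _ _).mul_const,
    integral_mul_const, h.integral_mul]

lemma integral_dot_mul_dot_sq [Fintype κ] [DecidableEq κ] (h : IsRademacherFamily ε μ)
    (x y : κ → ℝ) :
    ∫ ω, ((∑ k, ε k ω * x k) * (∑ k, ε k ω * y k)) ^ 2 ∂μ =
      (∑ k, x k ^ 2) * (∑ k, y k ^ 2) + 2 * ((∑ k, x k * y k) ^ 2 - ∑ k, x k ^ 2 * y k ^ 2) := by
  have hpt : ∀ ω, ((∑ k, ε k ω * x k) * (∑ k, ε k ω * y k)) ^ 2 =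
      ∑ a, ∑ b, ∑ c, ∑ e, ε a ω * ε b ω * ε c ω * ε e ω * (x a * y b * x c * y e) := fun ω ↦ by
    rw [sq, sum_mul_mul_sum_mul]
    simp only [sum_mul, mul_sum]
    exact sum_congr rfl fun a _ ↦ sum_congr rfl fun b _ ↦ sum_congr rfl fun c _ ↦
      sum_congr rfl fun e _ ↦ by ring
  simp_rw [hpt]
  simp (maxDischargeDepth := 6) only [integral_finsetSum, integrable_finsetSum,
    (h.integrable_mul_mul_mul _ _ _ _).mul_const, integral_mul_const, h.integral_mul_mul_mul,
    mem_univ, implies_true]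
  exact sum_rademacherFourthMoment_mul x y

end

section

variable {Ω ι J κ : Type*} [MeasurableSpace Ω] {μ : Measure Ω} {ε : ι × J × κ → Ω → ℝ}

lemma row (h : IsRademacherFamily ε μ) (i : ι) (j : J) :
    IsRademacherFamily (fun k ↦ ε (i, j, k)) μ :=
  h.comp_injective fun _ _ hk ↦ by simpa using hk

variable [Fintype κ]

lemma iIndepFun_dot_mul_dot (h : IsRademacherFamily ε μ) (x y : κ → ℝ) :
    iIndepFun (fun (q : J × ι) ω ↦
      (∑ k, ε (q.2, q.1, k) ω * x k) * (∑ k, ε (q.2, q.1, k) ω * y k)) μ := by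
  have hrows : iIndepFun (fun (q : J × ι) ω k ↦ ε (q.2, q.1, k) ω) μ :=
    iIndepFun.curry (X := fun (q : J × ι) k ↦ ε (q.2, q.1, k)) (fun _ _ ↦ h.measurable _)
      (h.independent.precomp (g := fun p : (J × ι) × κ ↦ (p.1.2, p.1.1, p.2))
        fun _ _ hp ↦ by simp_all [Prod.ext_iff])
  exact hrows.comp (fun _ v ↦ (∑ k, v k * x k) * (∑ k, v k * y k)) fun _ ↦ by fun_prop

theorem variance_sketch [Fintype ι] [Fintype J] [DecidableEq κ] (h : IsRademacherFamily ε μ)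
    (x y : κ → ℝ) :
    Var[fun ω ↦ (∑ j, (∏ i, ∑ k, ε (i, j, k) ω * x k) * (∏ i, ∑ k, ε (i, j, k) ω * y k)) /
        Fintype.card J; μ] =
      (Fintype.card J : ℝ)⁻¹ *
        (((∑ k, x k ^ 2) * (∑ k, y k ^ 2) + 2 * ((∑ k, x k * y k) ^ 2 - ∑ k, x k ^ 2 * y k ^ 2))
          ^ Fintype.card ι - (∑ k, x k * y k) ^ (2 * Fintype.card ι)) := by
  have := h.independent.isProbabilityMeasure
  have := h.measurable
  set U : J → ι → Ω → ℝ := fun j i ω ↦ (∑ k, ε (i, j, k) ω * x k) * (∑ k, ε (i, j, k) ω * y k)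
  have hU : iIndepFun (fun q : J × ι ↦ U q.1 q.2) μ := h.iIndepFun_dot_mul_dot x y
  have hUmem : ∀ j i, MemLp (U j i) ⊤ μ := fun j i ↦ (h.row i j).memLp_top_dot_mul_dot x y
  have hS : iIndepFun (fun j ω ↦ ∏ i, U j i ω) μ :=
    (hU.curry fun _ _ ↦ by fun_prop).comp (fun _ v ↦ ∏ i, v i) fun _ ↦ by fun_prop
  have hvar : ∀ j, Var[fun ω ↦ ∏ i, U j i ω; μ] =
      ((∑ k, x k ^ 2) * (∑ k, y k ^ 2) + 2 * ((∑ k, x k * y k) ^ 2 - ∑ k, x k ^ 2 * y k ^ 2))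
        ^ Fintype.card ι - (∑ k, x k * y k) ^ (2 * Fintype.card ι) := fun j ↦ by
    rw [(hU.precomp (g := Prod.mk j) (Prod.mk_right_injective j)).variance_fun_prod (hUmem j)]
    simp [U, (h.row _ j).integral_dot_mul_dot_sq, (h.row _ j).integral_dot_mul_dot, pow_mul]
  simp_rw [← prod_mul_distrib]
  exact variance_fun_sum_div_card_of_pairwise_indepFun (fun _ _ hjj' ↦ hS.indepFun hjj')
    (fun j ↦ (by simpa using MemLp.prod' fun i _ ↦ hUmem j i : MemLp _ ⊤ μ).mono_exponent le_top)
    hvar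

end

end IsRademacherFamily

theorem rademacher_sketch_variance_general
    {Ω : Type*} [MeasureSpace Ω]
    (n D d : ℕ)
    (W : Fin n → Ω → Matrix (Fin D) (Fin d) ℝ)
    (hmeas : ∀ i j k, Measurable fun ω => W i ω j k)
    (hindep : iIndepFun
      (fun p : Fin n × Fin D × Fin d => fun ω => W p.1 ω p.2.1 p.2.2) ℙ)
    (hsign : ∀ i ω j k, W i ω j k = 1 ∨ W i ω j k = -1)
    (hmean : ∀ i j k, ∫ ω, W i ω j k = 0)
    (x y : Fin d → ℝ) :
    variance (fun ω => (∑ j : Fin D,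
        (∏ i : Fin n, ∑ k : Fin d, W i ω j k * x k) *
        (∏ i : Fin n, ∑ k : Fin d, W i ω j k * y k)) / D) ℙ =
      (D : ℝ)⁻¹ *
        (((∑ k, x k ^ 2) * (∑ k, y k ^ 2) +
            2 * ((∑ k, x k * y k) ^ 2 - ∑ k, x k ^ 2 * y k ^ 2)) ^ n -
          (∑ k, x k * y k) ^ (2 * n)) := by
  have hW : IsRademacherFamily
      (fun p : Fin n × Fin D × Fin d => fun ω => W p.1 ω p.2.1 p.2.2) ℙ :=
    ⟨hindep, fun _ ↦ hmeas _ _ _, fun _ _ ↦ hsign _ _ _ _, fun _ ↦ hmean _ _ _⟩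
  simpa using hW.variance_sketch x y

/-- variance of the Rademacher polynomial sketch. If the `Wᵢ` have
    i.i.d. `Unif({-1,+1})` entries, then
    `Var[φₙ(x)ᵀφₙ(y)] = D⁻¹[(‖x‖²‖y‖² + 2(⟨x,y⟩² − ∑_k x_k²y_k²))ⁿ − ⟨x,y⟩^{2n}]`. -/
theorem rademacher_sketch_variance
    {Ω : Type*} [MeasureSpace Ω] [IsProbabilityMeasure (ℙ : Measure Ω)]
    (n D d : ℕ) (hD : 0 < D)
    (W : Fin n → Ω → Matrix (Fin D) (Fin d) ℝ)
    (hmeas : ∀ i j k, Measurable fun ω => W i ω j k)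
    (hindep : iIndepFun
      (fun p : Fin n × Fin D × Fin d => fun ω => W p.1 ω p.2.1 p.2.2) ℙ)
    (hsign : ∀ i ω j k, W i ω j k = 1 ∨ W i ω j k = -1)
    (hmean : ∀ i j k, ∫ ω, W i ω j k = 0)
    (x y : Fin d → ℝ) :
    variance (fun ω => (∑ j : Fin D,
        (∏ i : Fin n, ∑ k : Fin d, W i ω j k * x k) *
        (∏ i : Fin n, ∑ k : Fin d, W i ω j k * y k)) / D) ℙ =
      (D : ℝ)⁻¹ *
        (((∑ k, x k ^ 2) * (∑ k, y k ^ 2) +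
            2 * ((∑ k, x k * y k) ^ 2 - ∑ k, x k ^ 2 * y k ^ 2)) ^ n -
          (∑ k, x k * y k) ^ (2 * n)) :=
  rademacher_sketch_variance_general n D d W hmeas hindep hsign hmean x y
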